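/- Let Σ = {a,b} and consider the 2-ambiguous weighted automaton A over (ℕ,+,×) with two states, both initial and final, where state 1 has self-loops a with weight 2 and b with weight 1, and state 2 has self-loops a with weight 1 and b with weight 3. Then there is no unambiguous weighted automaton B over (ℕ,+,×) with ⟦B⟧(w) = 2^{|w|_a} + 3^{|w|_b} for all w ∈ Σ⁺. -/

import Mathlib

/-!
Suppose an unambiguous automaton with `n` states computes `2^|w|_a + 3^|w|_b`. Its unique
accepting run on `a^(n+2) b` revisits a state within the first `n` letters, so it contains an
`a`-loop of some length `1 ≤ m ≤ n` and weight `c`. Traversing the loop twice gives the unique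
accepting run on `a^(n+m+2) b`, whose weight is `c` times the old one, so
`c (2^(n+2) + 3) = 2^(n+m+2) + 3`. Since `4 · 2^m ≤ 2^(n+2)`, this fails both for `c < 2^m`
(the left side is too small) and for `c ≥ 2^m` (it is too large).
-/

variable {Q Q' A R : Type*}

/-- `RunFrom Δ p w ρ`: `ρ` is the list of states visited after `p` along a run
reading `w` that starts in `p`. -/
def RunFrom (Δ : Q → A → Q → Prop) : Q → List A → List Q → Prop
  | _, [], [] => True
  | p, a :: w, q :: ρ => Δ p a q ∧ RunFrom Δ q w ρ
  | _, _, _ => False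

/-- There is a run from `p` to `q` reading `w`. -/
def HasRun (Δ : Q → A → Q → Prop) (p : Q) (w : List A) (q : Q) : Prop :=
  ∃ ρ, RunFrom Δ p w ρ ∧ (p :: ρ).getLast (List.cons_ne_nil _ _) = q

/-- `m`-fold power of a word. -/
def wpow (u : List A) (m : ℕ) : List A := (List.replicate m u).flatten

/-- Aperiodicity of a nondeterministic automaton. -/
def Aperiodic (Δ : Q → A → Q → Prop) : Prop :=
  ∃ m, 1 ≤ m ∧ ∀ (p q : Q) (u : List A), u ≠ [] →
    (HasRun Δ p (wpow u m) q ↔ HasRun Δ p (wpow u (m + 1)) q)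

/-- `p` and `q` are in the same strongly connected component. -/
def SameSCC (Δ : Q → A → Q → Prop) (p q : Q) : Prop :=
  p = q ∨ ((∃ u : List A, u ≠ [] ∧ HasRun Δ p u q) ∧ (∃ v : List A, v ≠ [] ∧ HasRun Δ q v p))

/-- The automaton is unambiguous from `p` to `q`. -/
def UnambFromTo (Δ : Q → A → Q → Prop) (p q : Q) : Prop :=
  ∀ (u : List A) (ρ₁ ρ₂ : List Q), u ≠ [] →
    RunFrom Δ p u ρ₁ → RunFrom Δ p u ρ₂ →
    (p :: ρ₁).getLast (List.cons_ne_nil _ _) = q →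
    (p :: ρ₂).getLast (List.cons_ne_nil _ _) = q → ρ₁ = ρ₂

def SCCUnambiguous (Δ : Q → A → Q → Prop) : Prop :=
  ∀ p q : Q, SameSCC Δ p q → UnambFromTo Δ p q

/-- The set of accepting runs on `w`, represented as pairs of an initial state and
the list of subsequently visited states. -/
def AccRuns (Δ : Q → A → Q → Prop) (I F : Set Q) (w : List A) : Set (Q × List Q) :=
  {x | x.1 ∈ I ∧ RunFrom Δ x.1 w x.2 ∧ (x.1 :: x.2).getLast (List.cons_ne_nil _ _) ∈ F}

/-- The sequence of weights along a run. -/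
def wgtSeq (wgt : Q → A → Q → R) : Q → List A → List Q → List R
  | p, a :: w, q :: ρ => wgt p a q :: wgtSeq wgt q w ρ
  | _, _, _ => []

open List

section Runs

variable {Δ : Q → A → Q → Prop}

theorem List.getLastD_append (l l' : List Q) (a : Q) :
    (l ++ l').getLastD a = l'.getLastD (l.getLastD a) := by
  induction l generalizing a with
  | nil => rfl
  | cons b l ih => simp only [cons_append, getLastD_cons, ih]

theorem RunFrom.length_eq : ∀ {p : Q} {w : List A} {ρ : List Q},
    RunFrom Δ p w ρ → ρ.length = w.length
  | _, [], [], _ => rfl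
  | _, _ :: _, _ :: _, h => by simpa using h.2.length_eq
  | _, [], _ :: _, h => h.elim
  | _, _ :: _, [], h => h.elim

theorem RunFrom.append : ∀ {p : Q} {u v : List A} {ρ σ : List Q},
    RunFrom Δ p u ρ → RunFrom Δ (ρ.getLastD p) v σ → RunFrom Δ p (u ++ v) (ρ ++ σ)
  | _, [], _, [], _, _, hσ => hσ
  | _, _ :: _, _, _ :: _, _, hρ, hσ => ⟨hρ.1, hρ.2.append (by rwa [getLastD_cons] at hσ)⟩
  | _, [], _, _ :: _, _, hρ, _ => hρ.elim
  | _, _ :: _, _, [], _, hρ, _ => hρ.elim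

theorem RunFrom.exists_of_append : ∀ {p : Q} {u v : List A} {τ : List Q},
    RunFrom Δ p (u ++ v) τ →
      ∃ ρ σ, τ = ρ ++ σ ∧ RunFrom Δ p u ρ ∧ RunFrom Δ (ρ.getLastD p) v σ
  | _, [], _, τ, h => ⟨[], τ, rfl, trivial, h⟩
  | _, _ :: _, _, q :: _, h => by
    obtain ⟨ρ, σ, rfl, hρ, hσ⟩ := exists_of_append h.2
    exact ⟨q :: ρ, σ, rfl, ⟨h.1, hρ⟩, by rwa [getLastD_cons]⟩
  | _, _ :: _, _, [], h => h.elim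

theorem prod_wgtSeq_append [Monoid R] (wgt : Q → A → Q → R) : ∀ {p : Q} {u : List A}
    {ρ : List Q} (v : List A) (σ : List Q), ρ.length = u.length →
      (wgtSeq wgt p (u ++ v) (ρ ++ σ)).prod
        = (wgtSeq wgt p u ρ).prod * (wgtSeq wgt (ρ.getLastD p) v σ).prod
  | _, [], [], _, _, _ => by simp [wgtSeq]
  | _, _ :: _, _ :: _, v, σ, h => by
    simp only [cons_append, wgtSeq, prod_cons, getLastD_cons,
      prod_wgtSeq_append wgt v σ (by simpa using h), mul_assoc]
  | _, [], _ :: _, _, _, h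
  | _, _ :: _, [], _, _, h => by simp at h

theorem RunFrom.pump [CommMonoid R] (wgt : Q → A → Q → R) {p q : Q} {x y z : List A}
    {ρ σ θ : List Q} (hx : RunFrom Δ p x ρ) (hy : RunFrom Δ q y σ) (hz : RunFrom Δ q z θ)
    (hρ : ρ.getLastD p = q) (hσ : σ.getLastD q = q) :
    RunFrom Δ p (x ++ y ++ y ++ z) (ρ ++ σ ++ σ ++ θ) ∧
      (ρ ++ σ ++ σ ++ θ).getLastD p = (ρ ++ σ ++ θ).getLastD p ∧
      (wgtSeq wgt p (x ++ y ++ y ++ z) (ρ ++ σ ++ σ ++ θ)).prod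
        = (wgtSeq wgt q y σ).prod * (wgtSeq wgt p (x ++ y ++ z) (ρ ++ σ ++ θ)).prod := by
  subst hρ
  refine ⟨((hx.append hy).append ?_).append ?_, ?_, ?_⟩
  · rwa [getLastD_append, hσ]
  · rwa [getLastD_append, getLastD_append, hσ, hσ]
  · simp only [getLastD_append, hσ]
  have hxy : (ρ ++ σ).length = (x ++ y).length := by simp [hx.length_eq, hy.length_eq]
  have hxyy : (ρ ++ σ ++ σ).length = (x ++ y ++ y).length := by simp [hx.length_eq, hy.length_eq]
  rw [prod_wgtSeq_append wgt _ _ hxyy, prod_wgtSeq_append wgt _ _ hxy,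
    prod_wgtSeq_append wgt _ _ hxy, prod_wgtSeq_append wgt _ _ hx.length_eq]
  simp only [getLastD_append, hσ]
  ac_rfl

theorem RunFrom.exists_pump [Fintype Q] [CommMonoid R] (wgt : Q → A → Q → R) {p : Q}
    {u : List A} {τ : List Q} (h : RunFrom Δ p u τ) (hu : Fintype.card Q ≤ u.length) :
    ∃ x y z, u = x ++ y ++ z ∧ y ≠ [] ∧ (x ++ y).length ≤ Fintype.card Q ∧
      ∃ τ' c, RunFrom Δ p (x ++ y ++ y ++ z) τ' ∧ τ'.getLastD p = τ.getLastD p ∧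
        (wgtSeq wgt p (x ++ y ++ y ++ z) τ').prod = c * (wgtSeq wgt p u τ).prod := by
  obtain ⟨i, j, hij, hrepeat⟩ : ∃ i j : Fin (Fintype.card Q + 1), i < j ∧
      (τ.take i).getLastD p = (τ.take j).getLastD p := by
    obtain ⟨i, j, hne, heq⟩ := Fintype.exists_ne_map_eq_of_card_lt
      (fun k : Fin (Fintype.card Q + 1) => (τ.take k).getLastD p) (by simp)
    rcases lt_or_gt_of_ne hne with hlt | hlt
    exacts [⟨i, j, hlt, heq⟩, ⟨j, i, hlt, heq.symm⟩]
  have hj_le := j.is_le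
  obtain ⟨x, y, z, rfl, hx, hy⟩ :
      ∃ x y z, u = x ++ y ++ z ∧ x.length = i ∧ y.length = (j - i : ℕ) :=
    ⟨u.take i, (u.drop i).take (j - i), (u.drop i).drop (j - i), by simp,
      by simp only [length_take]; omega,
      by simp only [length_take, length_drop]; omega⟩
  obtain ⟨ρσ, θ, rfl, hxy, hz⟩ := h.exists_of_append
  obtain ⟨ρ, σ, rfl, hρ, hσ⟩ := hxy.exists_of_append
  have hloop : σ.getLastD (ρ.getLastD p) = ρ.getLastD p := by
    have hi : (ρ ++ σ ++ θ).take i = ρ := by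
      rw [List.append_assoc, List.take_left' (by rw [hρ.length_eq, hx])]
    have hj : (ρ ++ σ ++ θ).take j = ρ ++ σ :=
      List.take_left' (by simp only [length_append, hρ.length_eq, hσ.length_eq, hx, hy]; omega)
    rwa [hi, hj, getLastD_append, eq_comm] at hrepeat
  rw [getLastD_append, hloop] at hz
  obtain ⟨hrun, hend, hweight⟩ := hρ.pump wgt hσ hz rfl hloop
  refine ⟨x, y, z, rfl, ne_nil_of_length_pos (by omega), ?_, _, _, hrun, hend, hweight⟩
  simp only [length_append, hx, hy]
  omega

end Runs

theorem List.eq_replicate_of_append_eq_replicate_append {a : A} {x y z v : List A} {N : ℕ}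
    (h : x ++ y ++ z = replicate N a ++ v) (hN : (x ++ y).length ≤ N) :
    y = replicate y.length a := by
  have hprefix := congrArg (take (x ++ y).length) h
  rw [take_left, take_append_of_le_length (by rwa [length_replicate]), take_replicate,
    min_eq_left hN] at hprefix
  exact (append_eq_replicate_iff.1 hprefix).2.2

theorem finsum_mem_eq_of_ncard_le_one {α M : Type*} [AddCommMonoid M] {s : Set α} {a : α}
    (hs : s.Finite) (h : s.ncard ≤ 1) (ha : a ∈ s) (f : α → M) : ∑ᶠ x ∈ s, f x = f a := by
  have hsa : s = {a} :=
    Set.eq_singleton_iff_unique_mem.2 ⟨ha, fun b hb => (Set.ncard_le_one hs).1 h b hb a ha⟩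
  rw [hsa, finsum_mem_singleton]

theorem finite_accRuns [Finite Q] (Δ : Q → A → Q → Prop) (I F : Set Q) (w : List A) :
    (AccRuns Δ I F w).Finite :=
  (Set.finite_univ.prod (List.finite_length_eq Q w.length)).subset
    fun _ hx => ⟨trivial, hx.2.1.length_eq⟩

theorem finsum_mem_accRuns_eq [Finite Q] {M : Type*} [AddCommMonoid M] {Δ : Q → A → Q → Prop}
    {I F : Set Q} {w : List A} {x : Q × List Q} (hunamb : (AccRuns Δ I F w).ncard ≤ 1)
    (hx : x ∈ AccRuns Δ I F w) (f : Q × List Q → M) : ∑ᶠ y ∈ AccRuns Δ I F w, f y = f x :=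
  finsum_mem_eq_of_ncard_le_one (finite_accRuns Δ I F w) hunamb hx f

theorem mul_two_pow_add_three_ne (c : ℕ) {m N : ℕ} (hm : 0 < m) (hmN : m + 2 ≤ N) :
    c * (2 ^ N + 3) ≠ 2 ^ (N + m) + 3 := by
  have h2 : 2 ≤ 2 ^ m := Nat.le_self_pow hm.ne' 2
  have h4 : 4 * 2 ^ m ≤ 2 ^ N :=
    calc 4 * 2 ^ m = 2 ^ (m + 2) := by ring
      _ ≤ 2 ^ N := Nat.pow_le_pow_right two_pos hmN
  rw [pow_add]
  intro h
  rcases lt_or_ge c (2 ^ m) with hc | hc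
  · have := Nat.mul_le_mul_right (2 ^ N + 3) hc
    nlinarith
  · have := Nat.mul_le_mul_right (2 ^ N + 3) hc
    nlinarith

/-- There is no unambiguous weighted automaton over the semiring `(ℕ, +, ×)` whose
semantics on a word `w ∈ {a,b}⁺` (with `a` encoded as `true` and `b` as `false`) is
`2^{|w|_a} + 3^{|w|_b}`. -/
theorem no_unambiguous_two_pow_add_three_pow :
    ¬ ∃ (Q : Type) (_ : Fintype Q) (Δ : Q → Bool → Q → Prop)
        (wgt : Q → Bool → Q → ℕ) (I F : Set Q),
      (∀ w : List Bool, (AccRuns Δ I F w).ncard ≤ 1) ∧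
      ∀ w : List Bool, w ≠ [] →
        (∑ᶠ x ∈ AccRuns Δ I F w, (wgtSeq wgt x.1 w x.2).prod)
          = 2 ^ w.count true + 3 ^ w.count false := by
  rintro ⟨Q, _, Δ, wgt, I, F, hunamb, hsem⟩
  set N := Fintype.card Q + 2
  set u := replicate N true ++ [false]
  have hsem_u := hsem u (by simp [u])
  obtain ⟨⟨p, τ⟩, hacc⟩ : (AccRuns Δ I F u).Nonempty := by
    refine Set.nonempty_iff_ne_empty.2 fun hempty => ?_
    rw [hempty, finsum_mem_empty] at hsem_u
    exact absurd hsem_u.symm (by positivity)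
  obtain ⟨x, y, z, hu, hy, hxy, τ', c, hrun, hend, hweight⟩ :=
    hacc.2.1.exists_pump wgt (by simp only [u, N, length_append, length_replicate]; omega)
  set v := x ++ y ++ y ++ z
  obtain ⟨m, rfl⟩ : ∃ m, y = replicate m true :=
    ⟨_, eq_replicate_of_append_eq_replicate_append hu.symm (by omega)⟩
  have hacc' : (p, τ') ∈ AccRuns Δ I F v :=
    ⟨hacc.1, hrun, by simpa only [AccRuns, getLast_eq_getLastD, hend] using hacc.2.2⟩
  have hsem_pumped := hsem v (by simp [v, hy])
  rw [finsum_mem_accRuns_eq (hunamb u) hacc] at hsem_u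
  rw [finsum_mem_accRuns_eq (hunamb _) hacc', hweight, hsem_u] at hsem_pumped
  have hcount : ∀ b, count b v = count b u + count b (replicate m true) := fun b => by
    simp only [v, hu, count_append]; ring
  have hu_true : count true u = N := by simp [u]
  have hu_false : count false u = 1 := by simp [u, count_replicate]
  rw [hcount, hcount, hu_true, hu_false, count_replicate_self, count_replicate] at hsem_pumped
  have hm : 0 < m := by simpa [Nat.pos_iff_ne_zero] using hy
  have hmN : m + 2 ≤ N := by simp only [length_append, length_replicate] at hxy; omega
  exact mul_two_pow_add_three_ne c hm hmN hsem_pumped
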